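/- arXiv:2002.01307 — 8 statements merged into one kernel-verified Lean document; each statement's English description precedes it below -/
import Mathlib

section
/- Let n, m, Δ ≥ 1 be integers satisfying n ≤ m + (1/2)·m·log₂(e·n/m) + log₂(Δ). Then n ≤ c·m + log₂(Δ) + (m/2)·log₂(log₂√(2e) + log₂(Δ)/m), where c = log₂√(2e²/(e − log₂ e)) + 1/2 ≤ 2.27. -/
/-!
With `x = n / m`, `L = log₂ Δ / m`, `ℓ = log₂ e` and `A = log₂ √(2e) + L`, the hypothesis reads
`x ≤ 1/2 + A + (1/2) log₂ x`. Since `ln x ≤ x / e`, the logarithm is at most the linear term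
`x ℓ / e`, which turns the hypothesis into the a priori bound `x ≤ A e / (e - ℓ)`; substituting
this bound back into `log₂ x` gives the claim, and `c ≤ 2.27` is a numerical estimate.
-/

open Real

lemma logb_two_exp_one : logb 2 (exp 1) = (log 2)⁻¹ := by
  rw [logb, log_exp, one_div]

lemma logb_two_exp_one_gt : 1.442695 < logb 2 (exp 1) := by
  rw [logb_two_exp_one, lt_inv_comm₀ (by norm_num) (log_pos one_lt_two)]
  linarith [log_two_lt_d9]

lemma logb_two_exp_one_lt : logb 2 (exp 1) < 1.4426951 := by
  rw [logb_two_exp_one, inv_lt_comm₀ (log_pos one_lt_two) (by norm_num)]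
  linarith [log_two_gt_d9]

lemma exp_one_sub_logb_two_exp_one_pos : 0 < exp 1 - logb 2 (exp 1) := by
  linarith [logb_two_exp_one_lt, exp_one_gt_d9]

lemma logb_sqrt {b y : ℝ} (hy : 0 ≤ y) : logb b √y = logb b y / 2 := by
  rw [logb, logb, log_sqrt hy, div_right_comm]

lemma logb_two_sqrt_two_mul_exp_one : logb 2 √(2 * exp 1) = (1 + logb 2 (exp 1)) / 2 := by
  rw [logb_sqrt (by positivity), logb_mul two_ne_zero (exp_pos 1).ne', logb_self_eq_one one_lt_two]

lemma logb_two_sqrt_le_of_le {y : ℝ} (hy : 0 < y) (hy' : y ≤ 11.5854) : logb 2 √y ≤ 1.77 := by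
  have hpow : y ^ 50 ≤ 2 ^ 177 :=
    (pow_le_pow_left₀ hy.le hy' 50).trans (by norm_num)
  have h50 := logb_le_logb_of_le one_lt_two (by positivity) hpow
  rw [logb_pow, logb_pow, logb_self_eq_one one_lt_two] at h50
  rw [logb_sqrt hy.le]
  norm_num at h50
  linarith

lemma logb_two_sqrt_const_add_half_le :
    logb 2 √(2 * exp 1 ^ 2 / (exp 1 - logb 2 (exp 1))) + 1 / 2 ≤ 2.27 := by
  have hpos := exp_one_sub_logb_two_exp_one_pos
  have hY : 2 * exp 1 ^ 2 / (exp 1 - logb 2 (exp 1)) ≤ 11.5854 := by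
    rw [div_le_iff₀ hpos]
    nlinarith [logb_two_exp_one_lt, exp_one_gt_d9, exp_one_lt_d9]
  linarith [logb_two_sqrt_le_of_le (by positivity) hY]

lemma exp_one_mul_logb_two_le {y : ℝ} (hy : 0 < y) : exp 1 * logb 2 y ≤ y * logb 2 (exp 1) := by
  have h : exp 1 * log y ≤ y := by simpa [exp_log hy] using exp_one_mul_le_exp (x := log y)
  rw [logb, logb, log_exp, mul_div_assoc', mul_one_div]
  exact div_le_div_of_nonneg_right h (log_pos one_lt_two).le

lemma le_mul_exp_one_div_of_le_add_half_logb {x A : ℝ} (hx : 0 < x)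
    (hA : exp 1 - logb 2 (exp 1) ≤ A * logb 2 (exp 1))
    (h : x ≤ 1 / 2 + A + logb 2 x / 2) :
    x ≤ A * exp 1 / (exp 1 - logb 2 (exp 1)) := by
  have hlog := exp_one_mul_logb_two_le hx
  have hpos := exp_one_sub_logb_two_exp_one_pos
  set e := exp 1
  set l := logb 2 e
  have he0 : 0 < e := exp_pos 1
  have hlin : x * (2 * e - l) ≤ (1 + 2 * A) * e := by nlinarith
  have hmul : x * (e - l) * (2 * e - l) ≤ A * e * (2 * e - l) := by
    nlinarith [mul_le_mul_of_nonneg_left hlin hpos.le, mul_le_mul_of_nonneg_left hA he0.le]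
  rw [le_div_iff₀ hpos]
  exact le_of_mul_le_mul_right hmul (by linarith)

lemma logb_two_mul_exp_one_div {A : ℝ} (hA : 0 < A) :
    logb 2 (A * exp 1 / (exp 1 - logb 2 (exp 1))) =
      logb 2 A + 2 * logb 2 √(2 * exp 1 ^ 2 / (exp 1 - logb 2 (exp 1))) - 1 - logb 2 (exp 1) := by
  have hpos := exp_one_sub_logb_two_exp_one_pos
  rw [logb_sqrt (by positivity), logb_div (by positivity) hpos.ne', logb_div (by positivity) hpos.ne',
    logb_mul hA.ne' (exp_pos 1).ne', logb_mul two_ne_zero (by positivity), logb_pow,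
    logb_self_eq_one one_lt_two]
  push_cast
  ring

theorem le_of_le_one_add_half_logb {x L : ℝ} (hx : 0 < x) (hL : 0 ≤ L)
    (h : x ≤ 1 + logb 2 (exp 1 * x) / 2 + L) :
    x ≤ logb 2 √(2 * exp 1 ^ 2 / (exp 1 - logb 2 (exp 1))) + 1 / 2 + L
      + logb 2 (logb 2 √(2 * exp 1) + L) / 2 := by
  rw [logb_mul (exp_pos 1).ne' hx.ne'] at h
  rw [logb_two_sqrt_two_mul_exp_one]
  have hA : exp 1 - logb 2 (exp 1) ≤ ((1 + logb 2 (exp 1)) / 2 + L) * logb 2 (exp 1) := by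
    nlinarith [logb_two_exp_one_gt, exp_one_lt_d9]
  have hxA := le_mul_exp_one_div_of_le_add_half_logb hx hA (by linarith)
  have hlog := logb_le_logb_of_le one_lt_two hx hxA
  rw [logb_two_mul_exp_one_div (by linarith [logb_two_exp_one_gt])] at hlog
  linarith

theorem stmt0_general (n m Δ : ℕ) (hn : 1 ≤ n) (hm : 1 ≤ m)
    (h : (n : ℝ) ≤ (m : ℝ) + (1 / 2) * (m : ℝ) *
        Real.logb 2 (Real.exp 1 * (n : ℝ) / (m : ℝ)) + Real.logb 2 (Δ : ℝ)) :
    (Real.logb 2 (Real.sqrt (2 * Real.exp 1 ^ 2 /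
        (Real.exp 1 - Real.logb 2 (Real.exp 1)))) + 1 / 2 ≤ 2.27) ∧
    (n : ℝ) ≤
      (Real.logb 2 (Real.sqrt (2 * Real.exp 1 ^ 2 /
          (Real.exp 1 - Real.logb 2 (Real.exp 1)))) + 1 / 2) * (m : ℝ)
        + Real.logb 2 (Δ : ℝ)
        + ((m : ℝ) / 2) *
            Real.logb 2 (Real.logb 2 (Real.sqrt (2 * Real.exp 1))
              + Real.logb 2 (Δ : ℝ) / (m : ℝ)) := by
  refine ⟨logb_two_sqrt_const_add_half_le, ?_⟩
  have hm0 : (0 : ℝ) < m := by exact_mod_cast hm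
  have hΔ : 0 ≤ logb 2 (Δ : ℝ) / m :=
    div_nonneg (div_nonneg (log_natCast_nonneg Δ) (log_nonneg one_le_two)) hm0.le
  have hnorm : (n : ℝ) / m ≤ 1 + logb 2 (exp 1 * (n / m)) / 2 + logb 2 (Δ : ℝ) / m := by
    rw [div_le_iff₀ hm0, ← mul_div_assoc]
    refine h.trans_eq ?_
    field_simp
  refine ((div_le_iff₀ hm0).1 (le_of_le_one_add_half_logb (by positivity) hΔ hnorm)).trans_eq ?_
  field_simp

/-- If positive integers `n, m, Δ` satisfy
`n ≤ m + (1/2)·m·log₂(e·n/m) + log₂ Δ`, then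
`n ≤ c·m + log₂ Δ + (m/2)·log₂(log₂ √(2e) + log₂ Δ / m)` where
`c = log₂ √(2e²/(e − log₂ e)) + 1/2 ≤ 2.27`. -/
theorem stmt0 (n m Δ : ℕ) (hn : 1 ≤ n) (hm : 1 ≤ m) (hΔ : 1 ≤ Δ)
    (h : (n : ℝ) ≤ (m : ℝ) + (1 / 2) * (m : ℝ) *
        Real.logb 2 (Real.exp 1 * (n : ℝ) / (m : ℝ)) + Real.logb 2 (Δ : ℝ)) :
    (Real.logb 2 (Real.sqrt (2 * Real.exp 1 ^ 2 /
        (Real.exp 1 - Real.logb 2 (Real.exp 1)))) + 1 / 2 ≤ 2.27) ∧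
    (n : ℝ) ≤
      (Real.logb 2 (Real.sqrt (2 * Real.exp 1 ^ 2 /
          (Real.exp 1 - Real.logb 2 (Real.exp 1)))) + 1 / 2) * (m : ℝ)
        + Real.logb 2 (Δ : ℝ)
        + ((m : ℝ) / 2) *
            Real.logb 2 (Real.logb 2 (Real.sqrt (2 * Real.exp 1))
              + Real.logb 2 (Δ : ℝ) / (m : ℝ)) :=
  stmt0_general n m Δ hn hm h
end

section
/- Let A ∈ ℤ^{n×n} be nonsingular with Δ = |det(A)| > 0, let p ∈ ℚⁿ and γ > 0. Then the number of integer points in the set P = ℤⁿ ∩ {A x : ‖x − p‖_∞ ≤ γ} is at most (2γ + 1)ⁿ · Δ. -/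
/-!
Two integer points of `A • box` in the same coset of the lattice `A ℤⁿ`, whose index is
`|det A|`, have preimages differing by an integer vector. Hence within one coset a point is
determined by the unit cell of the grid `p - γ + ℤⁿ` containing its preimage, and the box meets
at most `⌊2γ⌋ + 1` cells per coordinate.
-/

open Matrix

namespace Matrix

variable {ι : Type*} [Fintype ι] [DecidableEq ι] {A : Matrix ι ι ℤ}

theorem natCard_quotient_range_toLin' (hA : A.det ≠ 0) :
    Nat.card ((ι → ℤ) ⧸ LinearMap.range A.toLin') = A.det.natAbs := by
  let e := LinearEquiv.ofInjective A.toLin' (mulVec_injective_of_det_ne_zero hA)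
  rw [← Submodule.natAbs_det_equiv _ e, ← LinearMap.det_toLin' A]
  rfl

theorem finite_quotient_range_toLin' (hA : A.det ≠ 0) :
    Finite ((ι → ℤ) ⧸ LinearMap.range A.toLin') :=
  Nat.finite_of_card_ne_zero (by simpa [natCard_quotient_range_toLin' hA] using hA)

def intPointsImageBox (A : Matrix ι ι ℤ) (c : ι → ℝ) (γ : ℝ) : Set (ι → ℤ) :=
  {y | ∃ x : ι → ℝ, (∀ i, |x i - c i| ≤ γ) ∧ A.map (↑) *ᵥ x = (↑) ∘ y}

theorem eq_of_mulVec_eq_of_floor_eq (hA : A.det ≠ 0) {c x x' : ι → ℝ} {y y' : ι → ℤ}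
    (hx : A.map (↑) *ᵥ x = (↑) ∘ y) (hx' : A.map (↑) *ᵥ x' = (↑) ∘ y')
    (hyy' : y' - y ∈ LinearMap.range A.toLin') (hfloor : ∀ i, ⌊x i - c i⌋ = ⌊x' i - c i⌋) :
    y = y' := by
  obtain ⟨m, hm⟩ := hyy'
  rw [toLin'_apply] at hm
  have hdet : (A.map ((↑) : ℤ → ℝ)).det ≠ 0 := by
    rw [← Int.cast_det]
    exact_mod_cast hA
  have hx'_eq : x' = x + (↑) ∘ m := by
    refine mulVec_injective_of_det_ne_zero hdet ?_
    ext i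
    have hmi : (A.map (↑) *ᵥ (↑) ∘ m) i = (y' i - y i : ℝ) := by
      simpa [hm] using (RingHom.map_mulVec (Int.castRingHom ℝ) A m i).symm
    simp [mulVec_add, hx, hx', hmi]
  have hm0 : m = 0 := by
    ext i
    have := hfloor i
    rw [hx'_eq, Pi.add_apply, Function.comp_apply, add_sub_right_comm, Int.floor_add_intCast] at this
    simpa using this
  rw [← sub_eq_zero, ← neg_sub, ← hm, hm0, mulVec_zero, neg_zero]

theorem exists_injective_intPointsImageBox (hA : A.det ≠ 0) (c : ι → ℝ) (γ : ℝ) :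
    ∃ f : intPointsImageBox A c γ →
      ((ι → ℤ) ⧸ LinearMap.range A.toLin') × (ι → Fin (⌊2 * γ⌋₊ + 1)),
      Function.Injective f := by
  have hmem (y : intPointsImageBox A c γ) := y.2
  choose x hbox hx using hmem
  have hcell (y : intPointsImageBox A c γ) (i : ι) : ⌊x y i + γ - c i⌋₊ < ⌊2 * γ⌋₊ + 1 := by
    have := abs_le.mp (hbox y i)
    exact Nat.lt_succ_of_le (Nat.floor_le_floor (by linarith))
  refine ⟨fun y ↦ (Submodule.Quotient.mk y.1, fun i ↦ ⟨_, hcell y i⟩), fun y y' hyy' ↦ ?_⟩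
  obtain ⟨hcoset, hcells⟩ := Prod.ext_iff.mp hyy'
  refine Subtype.ext (eq_of_mulVec_eq_of_floor_eq (c := fun i ↦ c i - γ) hA (hx y) (hx y')
    ((Submodule.Quotient.eq _).mp hcoset.symm) fun i ↦ ?_)
  have hcell_eq := congrArg Fin.val (congrFun hcells i)
  have := abs_le.mp (hbox y i)
  have := abs_le.mp (hbox y' i)
  rw [sub_sub_eq_add_sub, sub_sub_eq_add_sub, ← Int.natCast_floor_eq_floor (by linarith),
    ← Int.natCast_floor_eq_floor (by linarith)]
  exact congrArg _ hcell_eq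

theorem finite_intPointsImageBox (hA : A.det ≠ 0) (c : ι → ℝ) (γ : ℝ) :
    (intPointsImageBox A c γ).Finite := by
  obtain ⟨f, hf⟩ := exists_injective_intPointsImageBox hA c γ
  have := finite_quotient_range_toLin' hA
  exact Set.finite_coe_iff.mp (Finite.of_injective f hf)

theorem natCard_intPointsImageBox_le (hA : A.det ≠ 0) (c : ι → ℝ) (γ : ℝ) :
    Nat.card (intPointsImageBox A c γ) ≤ A.det.natAbs * (⌊2 * γ⌋₊ + 1) ^ Fintype.card ι := by
  obtain ⟨f, hf⟩ := exists_injective_intPointsImageBox hA c γ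
  have := finite_quotient_range_toLin' hA
  simpa [Nat.card_prod, Nat.card_fun, natCard_quotient_range_toLin' hA] using
    Nat.card_le_card_of_injective f hf

end Matrix

/-- For a nonsingular integer matrix `A` with `Δ = |det A| > 0`,
`p ∈ ℚⁿ` and `γ > 0`, the number of integer points in
`P = ℤⁿ ∩ {A x : ‖x − p‖_∞ ≤ γ}` is at most `(2γ + 1)ⁿ · Δ`. -/
theorem stmt2 (n : ℕ) (A : Matrix (Fin n) (Fin n) ℤ) (hA : A.det ≠ 0)
    (p : Fin n → ℚ) (γ : ℝ) (hγ : 0 < γ)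
    (P : Set (Fin n → ℤ))
    (hP : P = {y : Fin n → ℤ | ∃ x : Fin n → ℝ,
        (∀ i, |x i - (p i : ℝ)| ≤ γ) ∧
        (∀ i, (y i : ℝ) = ∑ j, (A i j : ℝ) * x j)}) :
    P.Finite ∧ (Nat.card P : ℝ) ≤ (2 * γ + 1) ^ n * |(A.det : ℝ)| := by
  have hP_eq : P = intPointsImageBox A (fun i ↦ p i) γ := by
    simp only [hP, intPointsImageBox, funext_iff, mulVec, dotProduct, map_apply,
      Function.comp_apply, eq_comm]
  rw [hP_eq]
  refine ⟨finite_intPointsImageBox hA _ γ, ?_⟩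
  calc (Nat.card (intPointsImageBox A (fun i ↦ (p i : ℝ)) γ) : ℝ)
      ≤ (A.det.natAbs * (⌊2 * γ⌋₊ + 1) ^ n : ℕ) := by
        exact_mod_cast Fintype.card_fin n ▸ natCard_intPointsImageBox_le hA _ γ
    _ ≤ |(A.det : ℝ)| * (2 * γ + 1) ^ n := by
        push_cast [Nat.cast_natAbs, Int.cast_abs]
        gcongr
        exact Nat.floor_le (by positivity)
    _ = (2 * γ + 1) ^ n * |(A.det : ℝ)| := mul_comm _ _
end

section
/- Let A ∈ ℤ^{n×m} and B ∈ ℤ^{n×(n−m)} with rank(A) = m, rank(B) = n − m, and AᵀB = 0. Then for any subset 𝔅 ⊆ {1,…,n} with |𝔅| = m and complement 𝔑 = {1,…,n} ∖ 𝔅, one has Δ_gcd(B) · |det(A_{𝔅*})| = Δ_gcd(A) · |det(B_{𝔑*})|, where A_{𝔅*} is the m×m submatrix of A consisting of the rows indexed by 𝔅, and B_{𝔑*} is the (n−m)×(n−m) submatrix of B consisting of the rows indexed by 𝔑. -/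
/-!
Order the rows so that `𝔅` comes first and let `C = [A B]`. Multiplying `C` on the left by
`[[A_𝔅ᵀ, A_𝔑ᵀ], [0, 1]]` gives the block-triangular matrix `[[AᵀA, 0], [A_𝔑, B_𝔑]]`, so
`det A_𝔅 · det C = det (AᵀA) · det B_𝔑`. Up to sign `det C` does not depend on the row order, so
`|det A_S|` and `|det B_{Sᶜ}|` are in the fixed ratio `|det (AᵀA)| : |det C|` for every `m`-set
`S`; taking gcds, so are `Δ_gcd(A)` and `Δ_gcd(B)`. Finally `det C ≠ 0`, because `CᵀC` is the
block-diagonal matrix with blocks `AᵀA` and `BᵀB`, which are nonsingular by the rank hypotheses.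
-/

open Matrix

/-- The gcd of determinants of all `m × m` (row-selected) submatrices of an
`n × m` integer matrix.  Non-injective row selections contribute a zero
determinant, which does not affect the gcd. -/
def gcdMinors {n m : ℕ} (M : Matrix (Fin n) (Fin m) ℤ) : ℤ :=
  Finset.univ.gcd (fun f : Fin m → Fin n => (M.submatrix f id).det)

theorem Matrix.mulVec_injective_of_rank_eq_card {R m p : Type*} [CommRing R] [IsDomain R]
    [Fintype p] {M : Matrix m p R} (hM : M.rank = Fintype.card p) :
    Function.Injective M.mulVec := by
  have hdisj := Submodule.disjoint_ker_of_finrank_le (L := ⊤) M.mulVecLin <| by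
    rw [Submodule.map_top, finrank_top, ← Matrix.rank, hM, Module.finrank_fintype_fun_eq_card]
  rw [disjoint_comm, disjoint_top, LinearMap.ker_eq_bot] at hdisj
  exact hdisj

theorem Matrix.det_transpose_mul_self_ne_zero {R m p : Type*} [CommRing R] [LinearOrder R]
    [IsStrictOrderedRing R] [Fintype m] [Fintype p] [DecidableEq p] {M : Matrix m p R}
    (hM : Function.Injective M.mulVec) : (Mᵀ * M).det ≠ 0 := by
  intro h
  obtain ⟨v, hv, hMv⟩ := exists_mulVec_eq_zero_iff.mpr h
  refine hv (hM ?_)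
  have := congrArg (v ⬝ᵥ ·) hMv
  rw [← mulVec_mulVec, dotProduct_mulVec, vecMul_transpose, dotProduct_zero,
    dotProduct_self_eq_zero] at this
  rw [this, mulVec_zero]

theorem exists_sum_equiv_comp_inl_eq {α β γ : Type*} [Fintype α] [Fintype β] [Fintype γ]
    [DecidableEq γ] {f : α → γ} (hf : Function.Injective f)
    (h : Fintype.card α + Fintype.card β = Fintype.card γ) :
    ∃ σ : α ⊕ β ≃ γ, σ ∘ Sum.inl = f := by
  have hcard : Fintype.card β = Fintype.card {x // x ∉ Set.range f} := by
    rw [Fintype.card_subtype_compl, Set.card_range_of_injective hf]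
    omega
  exact ⟨(Equiv.sumCongr (Equiv.ofInjective f hf) (Fintype.equivOfCardEq hcard)).trans
    (Equiv.sumCompl (· ∈ Set.range f)), rfl⟩

theorem Finset.exists_sum_equiv_orderIsoOfFin {α : Type*} [Fintype α] [LinearOrder α]
    (S : Finset α) {p q : ℕ} (hS : S.card = p) (hS' : Sᶜ.card = q) :
    ∃ σ : Fin p ⊕ Fin q ≃ α, σ ∘ Sum.inl = (fun i => (S.orderIsoOfFin hS i : α)) ∧
      σ ∘ Sum.inr = (fun i => (Sᶜ.orderIsoOfFin hS' i : α)) :=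
  ⟨(Equiv.sumCongr (S.orderIsoOfFin hS).toEquiv ((Sᶜ.orderIsoOfFin hS').toEquiv.trans
    (Equiv.subtypeEquivRight fun _ => Finset.mem_compl))).trans (Equiv.sumCompl (· ∈ S)),
    rfl, rfl⟩

section BlockDeterminants

variable {R ι κ ν : Type*} [CommRing R] [Fintype ι] [Fintype κ] [Fintype ν]
  {A : Matrix ν ι R} {B : Matrix ν κ R}

theorem Matrix.transpose_mul_eq_add_submatrix_inl_inr {p q : Type*} (σ : ι ⊕ κ ≃ ν)
    (X : Matrix ν p R) (Y : Matrix ν q R) :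
    Xᵀ * Y = (X.submatrix (σ ∘ Sum.inl) id)ᵀ * Y.submatrix (σ ∘ Sum.inl) id
      + (X.submatrix (σ ∘ Sum.inr) id)ᵀ * Y.submatrix (σ ∘ Sum.inr) id := by
  ext i j
  simp only [add_apply, mul_apply, transpose_apply, submatrix_apply, id, Function.comp]
  rw [← Equiv.sum_comp σ (fun x => X x i * Y x j), Fintype.sum_sum_type]

theorem Matrix.det_submatrix_inl_mul_det_fromCols [DecidableEq ι] [DecidableEq κ]
    (σ : ι ⊕ κ ≃ ν) (hAB : Aᵀ * B = 0) :
    (A.submatrix (σ ∘ Sum.inl) id).det * ((fromCols A B).submatrix σ id).det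
      = (Aᵀ * A).det * (B.submatrix (σ ∘ Sum.inr) id).det := by
  set b := σ ∘ Sum.inl
  set c := σ ∘ Sum.inr
  have hsplit : (fromCols A B).submatrix σ id =
      fromBlocks (A.submatrix b id) (B.submatrix b id) (A.submatrix c id) (B.submatrix c id) := by
    ext (i | i) (j | j) <;> rfl
  have hmul : fromBlocks (A.submatrix b id)ᵀ (A.submatrix c id)ᵀ 0 1 * (fromCols A B).submatrix σ id
      = fromBlocks (Aᵀ * A) 0 (A.submatrix c id) (B.submatrix c id) := by
    rw [hsplit, fromBlocks_multiply, ← transpose_mul_eq_add_submatrix_inl_inr,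
      ← transpose_mul_eq_add_submatrix_inl_inr, hAB]
    simp
  have hdet := congrArg det hmul
  rwa [det_mul, det_fromBlocks_zero₂₁, det_fromBlocks_zero₁₂, det_one, mul_one,
    det_transpose] at hdet

theorem Matrix.det_fromCols_submatrix_mul_self [DecidableEq ι] [DecidableEq κ]
    (σ : ι ⊕ κ ≃ ν) (hAB : Aᵀ * B = 0) :
    ((fromCols A B).submatrix σ id).det * ((fromCols A B).submatrix σ id).det
      = (Aᵀ * A).det * (Bᵀ * B).det := by
  have hBA : Bᵀ * A = 0 := by
    rw [← transpose_transpose (Bᵀ * A), transpose_mul, transpose_transpose, hAB, transpose_zero]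
  have hgram : ((fromCols A B).submatrix σ id)ᵀ * (fromCols A B).submatrix σ id
      = fromBlocks (Aᵀ * A) 0 0 (Bᵀ * B) := by
    rw [transpose_submatrix, transpose_fromCols, submatrix_mul_equiv _ _ id σ id,
      submatrix_id_id, fromRows_mul_fromCols, hAB, hBA]
  have hdet := congrArg det hgram
  rwa [det_mul, det_transpose, det_fromBlocks_zero₂₁] at hdet

theorem Matrix.abs_det_fromCols_mul_abs_det_submatrix_inl [LinearOrder R] [IsStrictOrderedRing R]
    [DecidableEq ι] [DecidableEq κ] (σ τ : ι ⊕ κ ≃ ν) (hAB : Aᵀ * B = 0) :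
    |((fromCols A B).submatrix τ id).det| * |(A.submatrix (σ ∘ Sum.inl) id).det|
      = |(Aᵀ * A).det| * |(B.submatrix (σ ∘ Sum.inr) id).det| := by
  have hτσ : (fromCols A B).submatrix τ id
      = ((fromCols A B).submatrix σ id).submatrix (τ.trans σ.symm) (Equiv.refl _) := by
    ext; simp
  rw [hτσ, abs_det_submatrix_equiv_equiv, mul_comm, ← abs_mul, ← abs_mul,
    det_submatrix_inl_mul_det_fromCols σ hAB]

end BlockDeterminants

section GcdMinors

variable {n p : ℕ}

theorem gcdMinors_nonneg (M : Matrix (Fin n) (Fin p) ℤ) : 0 ≤ gcdMinors M := by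
  rw [gcdMinors, ← Finset.normalize_gcd, ← Int.abs_eq_normalize]
  exact abs_nonneg _

theorem gcdMinors_dvd_det_submatrix (M : Matrix (Fin n) (Fin p) ℤ) (f : Fin p → Fin n) :
    gcdMinors M ∣ (M.submatrix f id).det :=
  Finset.gcd_dvd (Finset.mem_univ f)

theorem dvd_mul_gcdMinors {M : Matrix (Fin n) (Fin p) ℤ} {c d : ℤ}
    (h : ∀ f : Fin p → Fin n, Function.Injective f → d ∣ c * (M.submatrix f id).det) :
    d ∣ c * gcdMinors M := by
  refine (Finset.gcd_mul_left' _ _ c).dvd_iff_dvd_right.mp (Finset.dvd_gcd fun f _ => ?_)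
  by_cases hf : Function.Injective f
  · exact h f hf
  · obtain ⟨i, j, hij, hne⟩ := Function.not_injective_iff.mp hf
    rw [det_zero_of_row_eq hne (by ext; simp [hij]), mul_zero]
    exact dvd_zero d

end GcdMinors

theorem abs_det_fromCols_mul_gcdMinors {n m k : ℕ} {A : Matrix (Fin n) (Fin m) ℤ}
    {B : Matrix (Fin n) (Fin k) ℤ} (hAB : Aᵀ * B = 0) (τ : Fin m ⊕ Fin k ≃ Fin n) :
    |((fromCols A B).submatrix τ id).det| * gcdMinors A = |(Aᵀ * A).det| * gcdMinors B := by
  have hcard : m + k = n := by simpa using Fintype.card_congr τ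
  have hrel := fun σ => abs_det_fromCols_mul_abs_det_submatrix_inl σ τ hAB
  refine Int.dvd_antisymm (mul_nonneg (abs_nonneg _) (gcdMinors_nonneg A))
    (mul_nonneg (abs_nonneg _) (gcdMinors_nonneg B)) ?_ ?_
  · refine dvd_mul_gcdMinors fun g hg => ?_
    obtain ⟨σ, hσ⟩ := exists_sum_equiv_comp_inl_eq hg (β := Fin m) (by simpa [add_comm] using hcard)
    have hσ' : ((Equiv.sumComm _ _).trans σ) ∘ Sum.inr = g := hσ
    rw [← dvd_abs, abs_mul, abs_abs, ← hσ', ← hrel]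
    exact mul_dvd_mul_left _ ((gcdMinors_dvd_det_submatrix _ _).trans (self_dvd_abs _))
  · refine dvd_mul_gcdMinors fun f hf => ?_
    obtain ⟨σ, rfl⟩ := exists_sum_equiv_comp_inl_eq hf (β := Fin k) (by simpa using hcard)
    rw [← dvd_abs, abs_mul, abs_abs, hrel]
    exact mul_dvd_mul_left _ ((gcdMinors_dvd_det_submatrix _ _).trans (self_dvd_abs _))

theorem stmt3_general (n m : ℕ)
    (A : Matrix (Fin n) (Fin m) ℤ) (B : Matrix (Fin n) (Fin (n - m)) ℤ)
    (hA : A.rank = m) (hB : B.rank = n - m) (hAB : A.transpose * B = 0)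
    (𝔅 : Finset (Fin n)) (h𝔅 : 𝔅.card = m) (h𝔑 : 𝔅ᶜ.card = n - m) :
    gcdMinors B * |(A.submatrix (fun i : Fin m => ((𝔅.orderIsoOfFin h𝔅 i : Fin n))) id).det|
      = gcdMinors A * |(B.submatrix (fun i : Fin (n - m) => ((𝔅ᶜ.orderIsoOfFin h𝔑 i : Fin n))) id).det| := by
  obtain ⟨σ, hσA, hσB⟩ := 𝔅.exists_sum_equiv_orderIsoOfFin h𝔅 h𝔑
  have hK : ((fromCols A B).submatrix σ id).det ≠ 0 := by
    have hgram := det_fromCols_submatrix_mul_self σ hAB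
    have hA' := det_transpose_mul_self_ne_zero
      (mulVec_injective_of_rank_eq_card (M := A) (hA.trans (Fintype.card_fin m).symm))
    have hB' := det_transpose_mul_self_ne_zero
      (mulVec_injective_of_rank_eq_card (M := B) (hB.trans (Fintype.card_fin _).symm))
    exact fun h => mul_ne_zero hA' hB' (by rw [← hgram, h, zero_mul])
  have hrel := abs_det_fromCols_mul_abs_det_submatrix_inl σ σ hAB
  rw [hσA, hσB] at hrel
  have hgcd := abs_det_fromCols_mul_gcdMinors hAB σ
  refine mul_left_cancel₀ (abs_ne_zero.mpr hK) ?_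
  rw [mul_left_comm, hrel, mul_left_comm, ← mul_assoc, ← hgcd, mul_assoc]

/-- For `A ∈ ℤ^{n×m}`, `B ∈ ℤ^{n×(n−m)}` with full column ranks
and `AᵀB = 0`, and any row subset `𝔅` of size `m` with complement `𝔑`,
`Δ_gcd(B)·|det A_{𝔅*}| = Δ_gcd(A)·|det B_{𝔑*}|`. -/
theorem stmt3 (n m : ℕ) (hmn : m ≤ n)
    (A : Matrix (Fin n) (Fin m) ℤ) (B : Matrix (Fin n) (Fin (n - m)) ℤ)
    (hA : A.rank = m) (hB : B.rank = n - m) (hAB : A.transpose * B = 0)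
    (𝔅 : Finset (Fin n)) (h𝔅 : 𝔅.card = m) (h𝔑 : 𝔅ᶜ.card = n - m) :
    gcdMinors B * |(A.submatrix (fun i : Fin m => ((𝔅.orderIsoOfFin h𝔅 i : Fin n))) id).det|
      = gcdMinors A * |(B.submatrix (fun i : Fin (n - m) => ((𝔅ᶜ.orderIsoOfFin h𝔑 i : Fin n))) id).det| :=
  stmt3_general n m A B hA hB hAB 𝔅 h𝔅 h𝔑
end

section
/- Steinitz's theorem: let ‖·‖ be a norm on ℝ^m and x₁, …, x_n ∈ ℝ^m with ∑ᵢ xᵢ = 0 and ‖xᵢ‖ ≤ 1 for all i. Then there exists a permutation π of {1,…,n} such that for all k ∈ {1,…,n}, ‖∑_{i=1}^{k} x_{π(i)}‖ ≤ m. -/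
/-!
Grinberg–Sevast'yanov. Call `x : ι → V` admissible when some weights `l ∈ [0,1]^ι` satisfy
`∑ lᵢ xᵢ = 0` and `∑ lᵢ ≥ |ι| - m`. For unit vectors this bounds `‖∑ xᵢ‖ = ‖∑ (1 - lᵢ) xᵢ‖`
by `∑ (1 - lᵢ) ≤ m`, and a zero-sum family is admissible with `l = 1`. An admissible family
always has a member whose removal keeps it admissible: rescale `l` to sum `|ι| - m - 1` and
take an extreme point `μ` of `{μ ∈ [0,1]^ι : ∑ μᵢ (xᵢ, 1) = ∑ lᵢ (xᵢ, 1)}`. Its fractional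
coordinates index linearly independent vectors of `V × ℝ`, so there are at most `m + 1` of
them, and then `∑ μᵢ = |ι| - m - 1` forces some `μᵢ = 0`. Removing members one at a time and
listing them in reverse order of removal gives the permutation.
-/

open Filter Topology Module

section Weights

variable {ι V : Type*} [Fintype ι] [AddCommGroup V] [Module ℝ V]

theorem linearIndepOn_fractional_of_mem_extremePoints {g : ι → V} {b : V} {μ : ι → ℝ}
    (hμ : μ ∈ (Set.Icc 0 1 ∩ Fintype.linearCombination ℝ g ⁻¹' {b}).extremePoints ℝ) :
    LinearIndepOn ℝ g {i | μ i ∈ Set.Ioo 0 1} := by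
  -- a relation `ν` among the fractional coordinates lets `μ` move by `±tν` inside the set
  set L := Fintype.linearCombination ℝ g
  rw [linearIndepOn_iff]
  intro ν hν hνg
  have hLν : L ν = 0 := by
    simpa [L, ← Finsupp.linearCombination_eq_fintype_linearCombination_apply] using hνg
  have hstay : ∀ i, ∀ᶠ t in 𝓝 (0 : ℝ),
      μ i + t * ν i ∈ Set.Icc 0 1 ∧ μ i - t * ν i ∈ Set.Icc 0 1 := by
    intro i
    by_cases hi : μ i ∈ Set.Ioo 0 1
    · have hcont : Continuous fun t : ℝ => (μ i + t * ν i, μ i - t * ν i) := by fun_prop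
      have hlim := hcont.tendsto 0
      simp only [zero_mul, add_zero, sub_zero] at hlim
      filter_upwards [hlim.eventually ((isOpen_Ioo.prod isOpen_Ioo).mem_nhds ⟨hi, hi⟩)]
        with t ht using ⟨Set.Ioo_subset_Icc_self ht.1, Set.Ioo_subset_Icc_self ht.2⟩
    · have hνi : ν i = 0 := (Finsupp.mem_supported' ℝ ν).1 hν i hi
      simp only [hνi, mul_zero, add_zero, sub_zero, and_self]
      exact Eventually.of_forall fun _ => ⟨hμ.1.1.1 i, hμ.1.1.2 i⟩
  obtain ⟨t, ht, ht0⟩ := ((eventually_all.2 hstay).filter_mono nhdsWithin_le_nhds).and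
    self_mem_nhdsWithin |>.exists (f := 𝓝[≠] (0 : ℝ))
  have hmem : ∀ s : ℝ, (∀ i, μ i + s * ν i ∈ Set.Icc 0 1) →
      μ + s • ⇑ν ∈ Set.Icc 0 1 ∩ L ⁻¹' {b} := fun s hs =>
    ⟨⟨fun i => (hs i).1, fun i => (hs i).2⟩, by simpa [map_add, map_smul, hLν] using hμ.1.2⟩
  have hseg := mem_openSegment_add_sub (𝕜 := ℝ) μ (t • ⇑ν)
  have hfix := hμ.2 (hmem t fun i => (ht i).1)
    (by simpa [sub_eq_add_neg] using hmem (-t) fun i => by simpa [sub_eq_add_neg] using (ht i).2)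
    hseg
  ext i
  simpa [show t ≠ 0 from ht0] using congrFun hfix i

theorem exists_linearIndepOn_fractional (g : ι → V) {μ₀ : ι → ℝ} (hμ₀ : μ₀ ∈ Set.Icc 0 1) :
    ∃ μ ∈ Set.Icc (0 : ι → ℝ) 1,
      Fintype.linearCombination ℝ g μ = Fintype.linearCombination ℝ g μ₀ ∧
      LinearIndepOn ℝ g {i | μ i ∈ Set.Ioo 0 1} := by
  set L := Fintype.linearCombination ℝ g
  have hclosed : IsClosed (L ⁻¹' {L μ₀}) := by
    have hfiber : L ⁻¹' {L μ₀} = (· - μ₀) ⁻¹' (LinearMap.ker L : Set (ι → ℝ)) := by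
      ext μ
      simp [sub_eq_zero]
    rw [hfiber]
    exact (Submodule.closed_of_finiteDimensional _).preimage (continuous_sub_right μ₀)
  obtain ⟨μ, hμ⟩ := (isCompact_Icc.inter_right hclosed).extremePoints_nonempty ⟨μ₀, hμ₀, rfl⟩
  exact ⟨μ, hμ.1.1, hμ.1.2, linearIndepOn_fractional_of_mem_extremePoints hμ⟩

theorem exists_eq_zero_of_sum_eq {m : ℕ} {μ : ι → ℝ} (hμ : μ ∈ Set.Icc 0 1)
    (hfrac : (Finset.univ.filter fun i => μ i ∈ Set.Ioo 0 1).card ≤ m + 1)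
    (hsum : ∑ i, μ i = Fintype.card ι - (m + 1)) : ∃ i, μ i = 0 := by
  by_contra! hne
  set F := Finset.univ.filter fun i => μ i ∈ Set.Ioo 0 1
  have hpos : ∀ i, 0 < μ i := fun i => (hμ.1 i).lt_of_ne' (hne i)
  have hdefect : ∑ i, (1 - μ i) = m + 1 := by
    simp [Finset.sum_sub_distrib, hsum]
  have hF : ∑ i ∈ F, (1 - μ i) = ∑ i, (1 - μ i) :=
    Finset.sum_filter_of_ne fun i _ h => ⟨hpos i, (hμ.2 i).lt_of_ne fun h1 => h (by simp [h1])⟩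
  have hlt : ∑ i ∈ F, (1 - μ i) < m + 1 := by
    rcases F.eq_empty_or_nonempty with hF0 | hF0
    · rw [hF0, Finset.sum_empty]
      positivity
    · calc ∑ i ∈ F, (1 - μ i) < ∑ i ∈ F, (1 : ℝ) :=
            Finset.sum_lt_sum_of_nonempty hF0 fun i _ => by linarith [hpos i]
        _ ≤ m + 1 := by simpa using (by exact_mod_cast hfrac : (F.card : ℝ) ≤ m + 1)
  linarith

theorem exists_weights_eq_zero [FiniteDimensional ℝ V] {m : ℕ} (hdim : finrank ℝ V ≤ m)
    (x : ι → V) {μ₀ : ι → ℝ} (hμ₀ : μ₀ ∈ Set.Icc 0 1)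
    (hsum : ∑ i, μ₀ i = Fintype.card ι - (m + 1)) :
    ∃ μ ∈ Set.Icc (0 : ι → ℝ) 1, ∑ i, μ i • x i = ∑ i, μ₀ i • x i ∧
      ∑ i, μ i = ∑ i, μ₀ i ∧ ∃ j, μ j = 0 := by
  classical
  obtain ⟨μ, hμ, hμL, hli⟩ := exists_linearIndepOn_fractional (fun i => (x i, (1 : ℝ))) hμ₀
  simp only [Fintype.linearCombination_apply, Prod.smul_mk, smul_eq_mul, mul_one,
    Prod.ext_iff, Prod.fst_sum, Prod.snd_sum] at hμL
  have hfrac : (Finset.univ.filter fun i => μ i ∈ Set.Ioo 0 1).card ≤ m + 1 := by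
    have hcard := hli.fintype_card_le_finrank
    rw [finrank_prod, finrank_self, Fintype.card_subtype] at hcard
    simp only [Set.mem_ofPred_eq] at hcard
    omega
  exact ⟨μ, hμ, hμL.1, hμL.2, exists_eq_zero_of_sum_eq hμ hfrac (hμL.2.trans hsum)⟩

def SteinitzAdmissible (m : ℕ) (x : ι → V) : Prop :=
  ∃ l ∈ Set.Icc (0 : ι → ℝ) 1, ∑ i, l i • x i = 0 ∧ (Fintype.card ι : ℝ) ≤ m + ∑ i, l i

theorem steinitzAdmissible_of_sum_eq_zero {m : ℕ} {x : ι → V} (hsum : ∑ i, x i = 0) :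
    SteinitzAdmissible m x :=
  ⟨1, ⟨zero_le_one, le_rfl⟩, by simpa using hsum, by simp⟩

theorem SteinitzAdmissible.exists_succAbove [FiniteDimensional ℝ V] {m n : ℕ}
    (hdim : finrank ℝ V ≤ m) {x : Fin (n + 1) → V} (h : SteinitzAdmissible m x) :
    ∃ j : Fin (n + 1), SteinitzAdmissible m fun i => x (j.succAbove i) := by
  obtain ⟨l, hl, hlx, hls⟩ := h
  rcases le_or_gt n m with hnm | hmn
  · exact ⟨0, 0, ⟨le_rfl, zero_le_one⟩, by simp, by simpa using hnm⟩
  rw [Fintype.card_fin, Nat.cast_add_one] at hls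
  have hmn' : (m : ℝ) < n := by exact_mod_cast hmn
  have hl_pos : 0 < ∑ i, l i := by linarith
  set c := ((n : ℝ) - m) / ∑ i, l i
  have hc0 : 0 ≤ c := div_nonneg (by linarith) hl_pos.le
  have hc1 : c ≤ 1 := (div_le_one hl_pos).2 (by linarith)
  have hcl : c • l ∈ Set.Icc (0 : Fin (n + 1) → ℝ) 1 :=
    ⟨fun i => mul_nonneg hc0 (hl.1 i), fun i => mul_le_one₀ hc1 (hl.1 i) (hl.2 i)⟩
  obtain ⟨μ, hμ, hμx, hμs, j, hj⟩ := exists_weights_eq_zero hdim x hcl (by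
    simp only [Pi.smul_apply, smul_eq_mul, ← Finset.mul_sum, c, div_mul_cancel₀ _ hl_pos.ne',
      Fintype.card_fin, Nat.cast_add_one]
    ring)
  refine ⟨j, fun i => μ (j.succAbove i), ⟨fun i => hμ.1 _, fun i => hμ.2 _⟩, ?_, ?_⟩
  · have hsplit := Fin.sum_univ_succAbove (fun i => μ i • x i) j
    simp only [hj, zero_smul, zero_add, hμx, Pi.smul_apply, smul_eq_mul, mul_smul,
      ← Finset.smul_sum, hlx, smul_zero] at hsplit
    exact hsplit.symm
  · have hsplit := Fin.sum_univ_succAbove μ j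
    simp only [hj, zero_add, hμs, Pi.smul_apply, smul_eq_mul, ← Finset.mul_sum, c,
      div_mul_cancel₀ _ hl_pos.ne'] at hsplit
    simp [← hsplit]

end Weights

section Normed

variable {ι E : Type*} [Fintype ι] [NormedAddCommGroup E] [NormedSpace ℝ E]

theorem SteinitzAdmissible.norm_sum_le {m : ℕ} {x : ι → E} (h : SteinitzAdmissible m x)
    (hx : ∀ i, ‖x i‖ ≤ 1) : ‖∑ i, x i‖ ≤ m := by
  obtain ⟨l, hl, hlx, hls⟩ := h
  calc ‖∑ i, x i‖ = ‖∑ i, (1 - l i) • x i‖ := by simp [sub_smul, Finset.sum_sub_distrib, hlx]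
    _ ≤ ∑ i, ‖(1 - l i) • x i‖ := _root_.norm_sum_le _ _
    _ ≤ ∑ i, (1 - l i) := Finset.sum_le_sum fun i _ => by
        have hli : 0 ≤ 1 - l i := sub_nonneg.2 (hl.2 i)
        rw [norm_smul, Real.norm_of_nonneg hli]
        exact mul_le_of_le_one_right hli (hx i)
    _ ≤ m := by
        rw [Finset.sum_sub_distrib, Finset.sum_const, Finset.card_univ, nsmul_one]
        linarith

theorem exists_perm_norm_sum_Iic_le [FiniteDimensional ℝ E] {m : ℕ} (hdim : finrank ℝ E ≤ m) :
    ∀ {n : ℕ} (x : Fin n → E), (∀ i, ‖x i‖ ≤ 1) → SteinitzAdmissible m x →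
      ∃ π : Equiv.Perm (Fin n), ∀ k, ‖∑ i ∈ Finset.Iic k, x (π i)‖ ≤ m
  | 0, _, _, _ => ⟨1, fun k => k.elim0⟩
  | n + 1, x, hx, h => by
    obtain ⟨j, hj⟩ := h.exists_succAbove hdim
    obtain ⟨π', hπ'⟩ := exists_perm_norm_sum_Iic_le hdim (fun i => x (j.succAbove i))
      (fun i => hx _) hj
    refine ⟨(finSuccEquivLast.trans (Equiv.optionCongr π')).trans (finSuccEquiv' j).symm,
      fun k => ?_⟩
    cases k using Fin.lastCases with
    | last =>
      rw [← Fin.top_eq_last, Finset.Iic_top, Equiv.sum_comp _ x]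
      exact h.norm_sum_le hx
    | cast k =>
      rw [← Fin.map_castSuccEmb_Iic, Finset.sum_map]
      simpa using hπ' k

end Normed

/-- Steinitz's theorem: for any norm on `ℝ^m`
(equivalently, any `m`-dimensional real normed space `E`) and vectors
`x₁, …, x_n` with `∑ xᵢ = 0` and `‖xᵢ‖ ≤ 1`, there is a permutation `π`
such that every partial sum satisfies `‖∑_{i ≤ k} x_{π(i)}‖ ≤ m`. -/
theorem stmt7 (m : ℕ) (E : Type*) [NormedAddCommGroup E] [NormedSpace ℝ E]
    [FiniteDimensional ℝ E] (hdim : Module.finrank ℝ E = m)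
    (n : ℕ) (x : Fin n → E)
    (hsum : ∑ i, x i = 0) (hnorm : ∀ i, ‖x i‖ ≤ 1) :
    ∃ π : Equiv.Perm (Fin n), ∀ k : Fin n,
      ‖∑ i ∈ Finset.univ.filter (fun i : Fin n => i ≤ k), x (π i)‖ ≤ (m : ℝ) := by
  obtain ⟨π, hπ⟩ := exists_perm_norm_sum_Iic_le hdim.le x hnorm
    (steinitzAdmissible_of_sum_eq_zero hsum)
  exact ⟨π, fun k => by simpa [Finset.filter_ge_eq_Iic] using hπ k⟩
end

section
/- Consider the group minimization problem: a finite abelian group 𝒢, elements g₀, g₁, …, g_n ∈ 𝒢, and cost c ∈ ℤⁿ_{≥0}, minimizing cᵀx over {x ∈ ℤⁿ_{≥0} : ∑ᵢ xᵢ gᵢ = g₀}. If the feasible set is nonempty, there exists an optimal solution z* with ‖z*‖₁ ≤ |𝒢| − 1. -/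
/-!
Minimize, over the feasible points, the cost and then the ℓ₁-norm, lexicographically. If the
minimizer `z` had `‖z‖₁ ≥ |𝒢|`, write its units as a sequence of at least `|𝒢|` group elements:
two of its `|𝒢| + 1` prefix sums coincide, so a nonempty block of the sequence sums to `0`.
Removing that block keeps the point feasible, does not increase the cost (as `c ≥ 0`) and
strictly decreases the norm.
-/

open Finset

theorem List.exists_infix_ne_nil_sum_eq_zero {G : Type*} [AddLeftCancelMonoid G] [Fintype G]
    (l : List G) (hl : Fintype.card G ≤ l.length) :
    ∃ t, t <:+: l ∧ t ≠ [] ∧ t.sum = 0 := by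
  obtain ⟨a, b, hne, hab⟩ := Fintype.exists_ne_map_eq_of_card_lt
    (fun k : Fin (l.length + 1) ↦ (l.take k).sum) (by simpa using Nat.lt_succ_of_le hl)
  wlog hlt : a < b generalizing a b
  · exact this b a hne.symm hab.symm (lt_of_le_of_ne (not_lt.mp hlt) hne.symm)
  have hb : (b : ℕ) ≤ l.length := Nat.lt_succ_iff.mp b.isLt
  refine ⟨(l.drop a).take (b - a),
    (List.take_prefix _ _).isInfix.trans (List.drop_suffix _ _).isInfix, ?_, ?_⟩
  · rw [← List.length_pos_iff, List.length_take, List.length_drop]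
    omega
  · have hsplit : l.take b = l.take a ++ (l.drop a).take (b - a) := by
      rw [← List.take_add, Nat.add_sub_cancel' hlt.le]
    simpa [hsplit] using hab

theorem Multiset.exists_le_ne_zero_map_sum_eq_zero {ι G : Type*} [AddCancelCommMonoid G]
    [Fintype G] (g : ι → G) (s : Multiset ι) (hs : Fintype.card G ≤ card s) :
    ∃ t ≤ s, t ≠ 0 ∧ (t.map g).sum = 0 := by
  induction s using Quotient.inductionOn with | h l => ?_
  obtain ⟨t, ht, hne, hsum⟩ := (l.map g).exists_infix_ne_nil_sum_eq_zero (by simpa using hs)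
  obtain ⟨l', hl', rfl⟩ := List.infix_map_iff.mp ht
  exact ⟨l', Multiset.coe_le.mpr hl'.sublist.subperm, by simpa using hne, by simpa using hsum⟩

theorem Multiset.sum_count_smul_eq_sum_map {ι M : Type*} [Fintype ι] [DecidableEq ι]
    [AddCommMonoid M] (t : Multiset ι) (g : ι → M) :
    ∑ i, t.count i • g i = (t.map g).sum := by
  rw [sum_multiset_map_count]
  exact (sum_subset (subset_univ _) fun i _ hi ↦ by
    rw [Multiset.count_eq_zero.mpr (by simpa using hi), zero_smul]).symm

theorem exists_le_ne_zero_sum_smul_eq_zero {ι G : Type*} [Fintype ι] [AddCancelCommMonoid G]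
    [Fintype G] (g : ι → G) (x : ι → ℕ) (hx : Fintype.card G ≤ ∑ i, x i) :
    ∃ y ≤ x, y ≠ 0 ∧ ∑ i, y i • g i = 0 := by
  classical
  set s : Multiset ι := ∑ i, x i • {i}
  have hcount (j : ι) : s.count j = x j := by
    simp [s, Multiset.count_sum', Multiset.count_singleton]
  obtain ⟨t, hts, htne, hsum⟩ := s.exists_le_ne_zero_map_sum_eq_zero g (by simpa [s] using hx)
  refine ⟨fun i ↦ t.count i, fun i ↦ hcount i ▸ Multiset.count_le_of_le i hts, ?_, ?_⟩
  · obtain ⟨i, hi⟩ := Multiset.exists_mem_of_ne_zero htne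
    exact fun h ↦ (Multiset.count_pos.mpr hi).ne' (congrFun h i)
  · rw [t.sum_count_smul_eq_sum_map, hsum]

theorem exists_shorter_sum_smul_eq_of_card_le {ι G : Type*} [Fintype ι] [AddCancelCommMonoid G]
    [Fintype G] (g : ι → G) (c z : ι → ℕ) (hz : Fintype.card G ≤ ∑ i, z i) :
    ∃ x : ι → ℕ, ∑ i, x i • g i = ∑ i, z i • g i ∧
      ∑ i, c i * x i ≤ ∑ i, c i * z i ∧ ∑ i, x i < ∑ i, z i := by
  obtain ⟨y, hyz, hy, hy0⟩ := exists_le_ne_zero_sum_smul_eq_zero g z hz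
  obtain ⟨j, hj⟩ := Function.ne_iff.mp hy
  refine ⟨z - y, ?_, sum_le_sum fun i _ ↦ Nat.mul_le_mul_left _ (Nat.sub_le _ _),
    sum_lt_sum (fun i _ ↦ Nat.sub_le _ _)
      ⟨j, mem_univ _, Nat.sub_lt_self (Nat.pos_of_ne_zero hj) (hyz j)⟩⟩
  calc ∑ i, (z - y) i • g i = ∑ i, (z - y) i • g i + ∑ i, y i • g i := by rw [hy0, add_zero]
    _ = ∑ i, z i • g i := by
      rw [← sum_add_distrib]
      exact sum_congr rfl fun i _ ↦ by rw [Pi.sub_apply, ← add_smul, Nat.sub_add_cancel (hyz i)]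

/-- group minimization problem over a finite abelian group `𝒢`:
minimize `cᵀx` over `{x ∈ ℤⁿ_{≥0} : ∑ᵢ xᵢ gᵢ = g₀}` with `c ≥ 0`.  If the
feasible set is nonempty, there is an optimal solution `z*` with
`‖z*‖₁ ≤ |𝒢| − 1`. -/
theorem stmt8 (𝒢 : Type*) [AddCommGroup 𝒢] [Fintype 𝒢]
    (n : ℕ) (g₀ : 𝒢) (g : Fin n → 𝒢) (c : Fin n → ℕ)
    (hfeas : ∃ x : Fin n → ℕ, ∑ i, x i • g i = g₀) :
    ∃ z : Fin n → ℕ, (∑ i, z i • g i = g₀) ∧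
      (∀ x : Fin n → ℕ, (∑ i, x i • g i = g₀) →
        ∑ i, c i * z i ≤ ∑ i, c i * x i) ∧
      ∑ i, z i ≤ Fintype.card 𝒢 - 1 := by
  obtain ⟨z, hmin⟩ := exists_minimalFor_of_wellFoundedLT
    (fun x : Fin n → ℕ ↦ ∑ i, x i • g i = g₀) (fun x ↦ toLex (∑ i, c i * x i, ∑ i, x i)) hfeas
  refine ⟨z, hmin.1, fun x hx ↦ (Prod.Lex.toLex_le_toLex'.mp (hmin.le hx)).1, ?_⟩
  by_contra! hlong
  obtain ⟨x, hx, hcost, hshort⟩ := exists_shorter_sum_smul_eq_of_card_le g c z (by omega)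
  exact hmin.not_lt (hx.trans hmin.1) (Prod.Lex.toLex_lt_toLex'.mpr ⟨hcost, fun _ ↦ hshort⟩)
end

section
/- Gomory's vertex bound: let 𝒢 be a finite abelian group, g₀, g₁, …, g_n ∈ 𝒢, and let P be the convex hull of {x ∈ ℤⁿ_{≥0} : ∑ᵢ xᵢ gᵢ = g₀}. Then every vertex v of P satisfies ∏_{i=1}^{n} (1 + vᵢ) ≤ |𝒢|. -/
/-!
A vertex of `P` is one of the lattice points `y` generating it. If `∏ (1 + yᵢ) > |𝒢|`, then by
pigeonhole two distinct `z, z' ≤ y` satisfy `∑ zᵢ gᵢ = ∑ z'ᵢ gᵢ`. Exchanging `z` for `z'` inside `y`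
gives two more lattice points `y - z + z'` and `y - z' + z` of `P`, whose midpoint is `y`; so `y` is
not a vertex.
-/

open Finset

theorem eq_of_midpoint_mem_extremePoints {𝕜 E : Type*} [Ring 𝕜] [LinearOrder 𝕜]
    [IsStrictOrderedRing 𝕜] [Invertible (2 : 𝕜)] [AddCommGroup E] [Module 𝕜 E] {A : Set E} {x y : E}
    (hx : x ∈ A) (hy : y ∈ A) (h : midpoint 𝕜 x y ∈ A.extremePoints 𝕜) : x = y := by
  obtain ⟨hxm, hym⟩ := (mem_extremePoints.1 h).2 x hx y hy (midpoint_mem_openSegment x y)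
  exact hxm.trans hym.symm

section

variable {ι : Type*}

theorem midpoint_natCast_tsub_add {y z z' : ι → ℕ} (hz : z ≤ y) (hz' : z' ≤ y) :
    midpoint ℝ (fun i => ((y - z + z') i : ℝ)) (fun i => ((y - z' + z) i : ℝ)) =
      fun i => (y i : ℝ) := by
  funext i
  rw [midpoint_eq_smul_add]
  simp only [Pi.smul_apply, Pi.add_apply, Pi.sub_apply, smul_eq_mul, invOf_eq_inv]
  push_cast [Nat.cast_sub (hz i), Nat.cast_sub (hz' i)]
  ring

theorem eq_of_natCast_mem_extremePoints {A : Set (ι → ℝ)} {y z z' : ι → ℕ}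
    (hz : z ≤ y) (hz' : z' ≤ y) (hy : (fun i => (y i : ℝ)) ∈ A.extremePoints ℝ)
    (h₁ : (fun i => ((y - z + z') i : ℝ)) ∈ A) (h₂ : (fun i => ((y - z' + z) i : ℝ)) ∈ A) :
    z = z' := by
  have hyy := eq_of_midpoint_mem_extremePoints h₁ h₂ (by rwa [midpoint_natCast_tsub_add hz hz'])
  funext i
  have hi : y i - z i + z' i = y i - z' i + z i := by exact_mod_cast congrFun hyy i
  have := hz i
  have := hz' i
  omega

variable [Fintype ι]

theorem sum_tsub_add_smul_eq {G : Type*} [AddCommMonoid G] (g : ι → G) {y z z' : ι → ℕ}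
    (hz : z ≤ y) (h : ∑ i, z i • g i = ∑ i, z' i • g i) :
    ∑ i, (y - z + z') i • g i = ∑ i, y i • g i := by
  simp only [Pi.add_apply, add_smul, sum_add_distrib]
  rw [← h, ← sum_add_distrib]
  simp only [Pi.sub_apply, ← add_smul, tsub_add_cancel_of_le (hz _)]

theorem exists_ne_mem_Iic_sum_smul_eq [DecidableEq ι] {G : Type*} [AddCommMonoid G] [Fintype G]
    (g : ι → G) (y : ι → ℕ) (h : Fintype.card G < ∏ i, (y i + 1)) :
    ∃ z ∈ Iic y, ∃ z' ∈ Iic y, z ≠ z' ∧ ∑ i, z i • g i = ∑ i, z' i • g i :=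
  exists_ne_map_eq_of_card_lt_of_maps_to (t := univ) (by simpa [Pi.card_Iic] using h)
    fun _ _ => mem_coe.2 (mem_univ _)

end

/-- Gomory's vertex bound: let `𝒢` be a finite abelian group,
`g₀, g₁, …, g_n ∈ 𝒢`, and `P` the convex hull of
`{x ∈ ℤⁿ_{≥0} : ∑ᵢ xᵢ gᵢ = g₀}`.  Every vertex (extreme point) `v` of `P`
satisfies `∏ᵢ (1 + vᵢ) ≤ |𝒢|`. -/
theorem stmt9 (𝒢 : Type*) [AddCommGroup 𝒢] [Fintype 𝒢]
    (n : ℕ) (g₀ : 𝒢) (g : Fin n → 𝒢)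
    (P : Set (Fin n → ℝ))
    (hP : P = convexHull ℝ {x : Fin n → ℝ | ∃ y : Fin n → ℕ,
        x = (fun i => (y i : ℝ)) ∧ ∑ i, y i • g i = g₀})
    (v : Fin n → ℝ) (hv : v ∈ Set.extremePoints ℝ P) :
    ∏ i, (1 + v i) ≤ (Fintype.card 𝒢 : ℝ) := by
  subst hP
  obtain ⟨y, rfl, hy⟩ := extremePoints_convexHull_subset hv
  by_contra! hlt
  have hcard : Fintype.card 𝒢 < ∏ i, (y i + 1) := by
    rw [← Nat.cast_lt (α := ℝ)]
    push_cast
    simpa only [add_comm] using hlt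
  obtain ⟨z, hz, z', hz', hne, hzz'⟩ := exists_ne_mem_Iic_sum_smul_eq g y hcard
  rw [mem_Iic] at hz hz'
  refine hne (eq_of_natCast_mem_extremePoints hz hz' hv ?_ ?_) <;>
    refine subset_convexHull ℝ _ ⟨_, rfl, ?_⟩
  · rw [sum_tsub_add_smul_eq g hz hzz', hy]
  · rw [sum_tsub_add_smul_eq g hz' hzz'.symm, hy]
end

section
/- Let A ∈ ℤ^{m×n}, let B be a nonsingular m×m submatrix of A with δ = |det(B)|, let Δ = Δ(A) be the maximum absolute value of m×m minors of A, and let γ > 0. Then the number of integer points in P = {A x : x ∈ ℝⁿ, ‖x‖₁ ≤ γ} is at most (2γ·Δ/δ + 1)^m · Δ. -/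
/-!
Write `B = A.submatrix id f`, `δ = |det B|` and `Δ = maxMinorCols A`. By Cramer's rule every
`y = A x` equals `B t` with `t = (det B)⁻¹ • (adjugate B * A) x`, and the entries of
`adjugate B * A` are themselves `m × m` minors of `A`; hence `‖t‖∞ ≤ ‖x‖₁ Δ / δ`.

It remains to count the integer points `y = B t` with `‖t‖∞ ≤ R`. The lattice `B ℤ^m` has index
`δ` in `ℤ^m`, and two integer points of the same class differ by `B s` with `s ∈ ℤ^m`. Fixing a
representative `r` of the class, the vectors `s` with `r + B s` in the set lie in the translate
`[-R, R]^m - B⁻¹ r`, which contains at most `(⌊2R⌋ + 1)^m` integer points.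
-/

/-- The maximum absolute value of `m × m` (column-selected) minors of an
`m × n` integer matrix. -/
def maxMinorCols {m n : ℕ} (A : Matrix (Fin m) (Fin n) ℤ) : ℕ :=
  Finset.univ.sup (fun f : Fin m → Fin n => ((A.submatrix id f).det).natAbs)

open Matrix

theorem Int.exists_fin_eq_ceil_add {a L : ℝ} {z : ℤ} (h₁ : a ≤ z) (h₂ : z ≤ a + L) :
    ∃ b : Fin (⌊L⌋₊ + 1), z = ⌈a⌉ + b := by
  have hc : ⌈a⌉ ≤ z := Int.ceil_le.mpr h₁
  refine ⟨⟨(z - ⌈a⌉).toNat, Nat.lt_succ_of_le (Nat.le_floor ?_)⟩, by simp; omega⟩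
  have : ((z - ⌈a⌉ : ℤ) : ℝ) ≤ L := by push_cast; linarith [Int.le_ceil a]
  have h0 : (0 : ℤ) ≤ z - ⌈a⌉ := by omega
  rw [← Int.toNat_of_nonneg h0] at this
  exact_mod_cast this

namespace Matrix

theorem adjugate_submatrix_mul_apply {m n R : Type*} [Fintype m] [DecidableEq m] [DecidableEq n]
    [CommRing R] (A : Matrix m n R) (f : m → n) (k : m) (i : n) :
    (adjugate (A.submatrix id f) * A) k i = (A.submatrix id (Function.update f k i)).det := by
  have : A.submatrix id (Function.update f k i) =
      (A.submatrix id f).updateCol k (fun j => A j i) := by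
    ext j l
    by_cases hl : l = k <;> simp [hl]
  rw [this, ← cramer_apply, cramer_eq_adjugate_mulVec]
  rfl

variable {ι : Type*} [Fintype ι]

def intPointsInParallelepiped (B : Matrix ι ι ℤ) (R : ℝ) : Set (ι → ℤ) :=
  {y | ∃ t : ι → ℝ, (∀ k, |t k| ≤ R) ∧ B.map (Int.cast : ℤ → ℝ) *ᵥ t = fun j => (y j : ℝ)}

variable [DecidableEq ι] {B : Matrix ι ι ℤ}

theorem card_quotient_range_mulVecLin (hB : B.det ≠ 0) :
    Nat.card ((ι → ℤ) ⧸ LinearMap.range B.mulVecLin) = B.det.natAbs := by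
  have hinj : Function.Injective B.mulVecLin := mulVec_injective_of_det_ne_zero hB
  rw [← Submodule.natAbs_det_equiv _ (LinearEquiv.ofInjective _ hinj), ← LinearMap.det_toLin']
  rfl

theorem exists_eq_add_mulVec_ceil_add (hB : B.det ≠ 0) {R : ℝ} {y r : ι → ℤ}
    (hy : y ∈ intPointsInParallelepiped B R) (hr : y - r ∈ LinearMap.range B.mulVecLin) :
    ∃ b : ι → Fin (⌊2 * R⌋₊ + 1), y = r + B *ᵥ fun k =>
      ⌈-R - ((B.map (Int.cast : ℤ → ℝ))⁻¹ *ᵥ fun j => (r j : ℝ)) k⌉ + b k := by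
  obtain ⟨t, ht, hBt⟩ := hy
  obtain ⟨s, hs⟩ := hr
  replace hs : B *ᵥ s = y - r := hs
  set B' := B.map (Int.cast : ℤ → ℝ)
  set t₀ := B'⁻¹ *ᵥ fun j => (r j : ℝ)
  have hcast : B' *ᵥ (fun k => (s k : ℝ)) = fun j => ((B *ᵥ s) j : ℝ) :=
    funext fun j => (RingHom.map_mulVec (Int.castRingHom ℝ) B s j).symm
  have hdet : B'.det ≠ 0 := by rw [← Int.cast_det]; exact_mod_cast hB
  have hts : t = t₀ + fun k => (s k : ℝ) := by
    refine mulVec_injective_of_det_ne_zero hdet ?_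
    rw [mulVec_add, mulVec_mulVec, mul_nonsing_inv _ (Ne.isUnit hdet), one_mulVec, hBt,
      hcast, hs]
    ext j
    simp
  have hbox : ∀ k, -R - t₀ k ≤ s k ∧ (s k : ℝ) ≤ -R - t₀ k + 2 * R := fun k => by
    have := abs_le.mp (ht k)
    rw [hts, Pi.add_apply] at this
    constructor <;> linarith
  choose b hb using fun k => Int.exists_fin_eq_ceil_add (hbox k).1 (hbox k).2
  refine ⟨b, ?_⟩
  rw [← funext hb, hs, add_sub_cancel]

theorem finite_quotient_range_mulVecLin (hB : B.det ≠ 0) :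
    Finite ((ι → ℤ) ⧸ LinearMap.range B.mulVecLin) :=
  Nat.finite_of_card_ne_zero <| by
    rw [card_quotient_range_mulVecLin hB]; exact Int.natAbs_ne_zero.mpr hB

theorem intPointsInParallelepiped_subset_range (hB : B.det ≠ 0) (R : ℝ) :
    intPointsInParallelepiped B R ⊆ Set.range
      fun p : ((ι → ℤ) ⧸ LinearMap.range B.mulVecLin) × (ι → Fin (⌊2 * R⌋₊ + 1)) =>
        p.1.out + B *ᵥ fun k =>
          ⌈-R - ((B.map (Int.cast : ℤ → ℝ))⁻¹ *ᵥ fun j => (p.1.out j : ℝ)) k⌉ + p.2 k := by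
  intro y hy
  set q : (ι → ℤ) ⧸ LinearMap.range B.mulVecLin := Submodule.Quotient.mk y
  obtain ⟨b, hb⟩ := exists_eq_add_mulVec_ceil_add hB hy
    ((Submodule.Quotient.eq _).mp (Submodule.Quotient.mk_out q).symm)
  exact ⟨(q, b), hb.symm⟩

theorem intPointsInParallelepiped_finite (hB : B.det ≠ 0) (R : ℝ) :
    (intPointsInParallelepiped B R).Finite :=
  have := finite_quotient_range_mulVecLin hB
  (Set.finite_range _).subset (intPointsInParallelepiped_subset_range hB R)

theorem card_intPointsInParallelepiped_le (hB : B.det ≠ 0) {R : ℝ} (hR : 0 ≤ R) :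
    (Nat.card (intPointsInParallelepiped B R) : ℝ) ≤
      (2 * R + 1) ^ Fintype.card ι * B.det.natAbs := by
  have := finite_quotient_range_mulVecLin hB
  have hcard : Nat.card (intPointsInParallelepiped B R) ≤
      (⌊2 * R⌋₊ + 1) ^ Fintype.card ι * B.det.natAbs := by
    calc Nat.card (intPointsInParallelepiped B R)
        ≤ Nat.card (Set.range _) :=
          Nat.card_mono (Set.finite_range _) (intPointsInParallelepiped_subset_range hB R)
      _ ≤ Nat.card (((ι → ℤ) ⧸ LinearMap.range B.mulVecLin) × (ι → Fin (⌊2 * R⌋₊ + 1))) :=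
          Finite.card_range_le _
      _ = _ := by
          rw [Nat.card_prod, card_quotient_range_mulVecLin hB, Nat.card_fun, Nat.card_fin,
            Nat.card_eq_fintype_card, mul_comm]
  calc (Nat.card (intPointsInParallelepiped B R) : ℝ)
      ≤ ((⌊2 * R⌋₊ + 1 : ℕ) : ℝ) ^ Fintype.card ι * B.det.natAbs := by exact_mod_cast hcard
    _ ≤ (2 * R + 1) ^ Fintype.card ι * B.det.natAbs := by
        gcongr
        push_cast
        linarith [Nat.floor_le (by positivity : (0 : ℝ) ≤ 2 * R)]

end Matrix


variable {m n : ℕ}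

theorem natAbs_det_submatrix_le_maxMinorCols (A : Matrix (Fin m) (Fin n) ℤ) (f : Fin m → Fin n) :
    (A.submatrix id f).det.natAbs ≤ maxMinorCols A :=
  Finset.le_sup (f := fun f : Fin m → Fin n => (A.submatrix id f).det.natAbs) (Finset.mem_univ f)

theorem natAbs_adjugate_submatrix_mul_apply_le (A : Matrix (Fin m) (Fin n) ℤ) (f : Fin m → Fin n)
    (k : Fin m) (i : Fin n) :
    ((adjugate (A.submatrix id f) * A) k i).natAbs ≤ maxMinorCols A := by
  rw [adjugate_submatrix_mul_apply]
  exact natAbs_det_submatrix_le_maxMinorCols A _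

theorem exists_submatrix_mulVec_eq_and_abs_le (A : Matrix (Fin m) (Fin n) ℤ) {f : Fin m → Fin n}
    (hB : (A.submatrix id f).det ≠ 0) (x : Fin n → ℝ) :
    ∃ t : Fin m → ℝ, (A.submatrix id f).map (Int.cast : ℤ → ℝ) *ᵥ t = A.map Int.cast *ᵥ x ∧
      ∀ k, |t k| ≤ (∑ i, |x i|) * maxMinorCols A / (A.submatrix id f).det.natAbs := by
  set B := A.submatrix id f
  obtain ⟨U, hU⟩ : ∃ U, adjugate B * A = U := ⟨_, rfl⟩
  have hBU : B.map (Int.cast : ℤ → ℝ) * U.map (Int.cast : ℤ → ℝ) =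
      (B.det : ℝ) • A.map (Int.cast : ℤ → ℝ) := by
    have : B * U = B.det • A := by
      rw [← hU, ← Matrix.mul_assoc, mul_adjugate, smul_mul, Matrix.one_mul]
    simp only [← Int.coe_castRingHom]
    rw [← Matrix.map_mul, this]
    ext i j
    simp
  have hdet : (B.det : ℝ) ≠ 0 := by exact_mod_cast hB
  refine ⟨(B.det : ℝ)⁻¹ • (U.map Int.cast *ᵥ x), ?_, fun k => ?_⟩
  · rw [mulVec_smul, mulVec_mulVec, hBU, smul_mulVec, smul_smul, inv_mul_cancel₀ hdet, one_smul]
  · have hUk : ∀ i, |(U k i : ℝ)| ≤ maxMinorCols A := fun i => by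
      rw [← Int.cast_abs, ← Int.natCast_natAbs, ← hU]
      exact_mod_cast natAbs_adjugate_submatrix_mul_apply_le A f k i
    calc |((B.det : ℝ)⁻¹ • (U.map Int.cast *ᵥ x)) k|
        = |∑ i, (U k i : ℝ) * x i| / B.det.natAbs := by
          simp [mulVec, dotProduct, abs_mul, Nat.cast_natAbs, div_eq_inv_mul]
      _ ≤ (∑ i, |(U k i : ℝ) * x i|) / B.det.natAbs := by
          gcongr; exact Finset.abs_sum_le_sum_abs _ _
      _ ≤ (∑ i, |x i| * maxMinorCols A) / B.det.natAbs := by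
          gcongr with i
          rw [abs_mul, mul_comm]
          gcongr
          exact hUk i
      _ = (∑ i, |x i|) * maxMinorCols A / B.det.natAbs := by rw [Finset.sum_mul]

theorem stmt12_general (m n : ℕ) (A : Matrix (Fin m) (Fin n) ℤ)
    (f : Fin m → Fin n)
    (hB : (A.submatrix id f).det ≠ 0)
    (γ : ℝ) (hγ : 0 < γ)
    (P : Set (Fin m → ℤ))
    (hP : P = {y : Fin m → ℤ | ∃ x : Fin n → ℝ, (∑ i, |x i|) ≤ γ ∧
        ∀ j, (y j : ℝ) = ∑ i, (A j i : ℝ) * x i}) :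
    P.Finite ∧ (Nat.card P : ℝ) ≤
      (2 * γ * (maxMinorCols A : ℝ) / (((A.submatrix id f).det.natAbs : ℝ)) + 1) ^ m
        * (maxMinorCols A : ℝ) := by
  set B := A.submatrix id f
  set Δ : ℝ := (maxMinorCols A : ℝ)
  set δ : ℝ := (B.det.natAbs : ℝ)
  have hδΔ : δ ≤ Δ := Nat.cast_le.mpr (natAbs_det_submatrix_le_maxMinorCols A f)
  have hsub : P ⊆ B.intPointsInParallelepiped (γ * Δ / δ) := by
    intro y hy
    obtain ⟨x, hx, hy⟩ := hP ▸ hy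
    obtain ⟨t, hBt, ht⟩ := exists_submatrix_mulVec_eq_and_abs_le A hB x
    exact ⟨t, fun k => (ht k).trans (by gcongr), hBt.trans (funext fun j => (hy j).symm)⟩
  refine ⟨(intPointsInParallelepiped_finite hB _).subset hsub, ?_⟩
  calc (Nat.card P : ℝ)
      ≤ Nat.card (B.intPointsInParallelepiped (γ * Δ / δ)) := by
        exact_mod_cast Nat.card_mono (intPointsInParallelepiped_finite hB _) hsub
    _ ≤ (2 * (γ * Δ / δ) + 1) ^ Fintype.card (Fin m) * δ :=
        card_intPointsInParallelepiped_le hB (by positivity)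
    _ ≤ (2 * (γ * Δ / δ) + 1) ^ m * Δ := by rw [Fintype.card_fin]; gcongr
    _ = (2 * γ * Δ / δ + 1) ^ m * Δ := by ring

/-- Let `A ∈ ℤ^{m×n}`, `B` a nonsingular `m×m` (column)
submatrix of `A` with `δ = |det B|`, `Δ = Δ(A)` the maximal absolute value of
`m×m` minors, `γ > 0`.  The number of integer points in
`P = {A x : ‖x‖₁ ≤ γ}` is at most `(2γΔ/δ + 1)^m · Δ`. -/
theorem stmt12 (m n : ℕ) (A : Matrix (Fin m) (Fin n) ℤ)
    (f : Fin m → Fin n) (hf : Function.Injective f)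
    (hB : (A.submatrix id f).det ≠ 0)
    (γ : ℝ) (hγ : 0 < γ)
    (P : Set (Fin m → ℤ))
    (hP : P = {y : Fin m → ℤ | ∃ x : Fin n → ℝ, (∑ i, |x i|) ≤ γ ∧
        ∀ j, (y j : ℝ) = ∑ i, (A j i : ℝ) * x i}) :
    P.Finite ∧ (Nat.card P : ℝ) ≤
      (2 * γ * (maxMinorCols A : ℝ) / (((A.submatrix id f).det.natAbs : ℝ)) + 1) ^ m
        * (maxMinorCols A : ℝ) :=
  stmt12_general m n A f hB γ hγ P hP
end

section
/- Unbounded case via Gomory (case m = 0 of the bounded proximity theorem): consider min{cᵀx : G x ≡ g (mod S), x ∈ ℤⁿ_{≥0}} with c ∈ ℤⁿ_{≥0}. If feasible, there exists an optimal solution z* with ‖z*‖₁ ≤ |det(S)| − 1. -/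
/-!
Read a solution `z` as the sequence of `‖z‖₁` columns of `G` it selects, and work in the group
`ℤⁿ ⧸ Sℤⁿ` of order `|det S|`. If `‖z‖₁ ≥ |det S|`, two of the prefix sums of that sequence
coincide, so some `0 ≠ d ≤ z` has `G d ∈ Sℤⁿ`: then `z - d` is again feasible, no more
expensive since `c ≥ 0`, and strictly shorter. Removing such cycles from an optimal solution
until none is left gives the bound.
-/

open Finset Matrix

section ZeroSum

variable {A : Type*} [AddCommGroup A] [Finite A]

theorem List.exists_sublist_ne_nil_sum_eq_zero (l : List A) (hl : Nat.card A ≤ l.length) :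
    ∃ l' : List A, l'.Sublist l ∧ l' ≠ [] ∧ l'.sum = 0 := by
  have hprefix : ¬ Function.Injective fun k : Fin (l.length + 1) => (l.take k).sum := fun h => by
    have := Nat.card_le_card_of_injective _ h
    simp only [Nat.card_eq_fintype_card, Fintype.card_fin] at this
    omega
  obtain ⟨i, j, hsum, hij⟩ := Function.not_injective_iff.1 hprefix
  wlog hlt : i < j generalizing i j
  · exact this j i hsum.symm hij.symm (lt_of_le_of_ne (not_lt.1 hlt) hij.symm)
  refine ⟨(l.take j).drop i, (List.drop_sublist _ _).trans (List.take_sublist _ _), ?_, ?_⟩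
  · have := j.isLt
    rw [← List.length_pos_iff, List.length_drop, List.length_take]
    omega
  · have := List.sum_take_add_sum_drop (l.take j) (i : ℕ)
    rwa [List.take_take, min_eq_left (Fin.le_def.1 hlt.le), ← hsum, add_eq_left] at this

theorem Multiset.exists_le_ne_zero_sum_map_eq_zero {ι : Type*} (f : ι → A) (s : Multiset ι)
    (hs : Nat.card A ≤ card s) : ∃ t ≤ s, t ≠ 0 ∧ (t.map f).sum = 0 := by
  induction s using Quotient.inductionOn with | h l => ?_
  obtain ⟨l', hl', hne, hsum⟩ := (l.map f).exists_sublist_ne_nil_sum_eq_zero (by simpa using hs)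
  obtain ⟨t, ht, rfl⟩ := List.sublist_map_iff.1 hl'
  exact ⟨t, Multiset.coe_le.2 ht.subperm, by simpa using hne, by simpa using hsum⟩

theorem exists_le_ne_zero_sum_nsmul_eq_zero {ι : Type*} [Fintype ι] [DecidableEq ι]
    (f : ι → A) (z : ι → ℕ) (hz : Nat.card A ≤ ∑ i, z i) :
    ∃ d ≤ z, d ≠ 0 ∧ ∑ i, d i • f i = 0 := by
  obtain ⟨t, hts, ht0, hsum⟩ :=
    (∑ i, z i • {i} : Multiset ι).exists_le_ne_zero_sum_map_eq_zero f (by simpa using hz)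
  have hcount (i : ι) : (∑ j, z j • {j} : Multiset ι).count i = z i := by
    simp [Multiset.count_sum', Multiset.count_singleton]
  refine ⟨fun i => t.count i, fun i => hcount i ▸ Multiset.count_le_of_le i hts, ?_, ?_⟩
  · obtain ⟨i, hi⟩ := Multiset.exists_mem_of_ne_zero ht0
    exact fun h => Multiset.count_ne_zero.2 hi (congrFun h i)
  · rwa [Finset.sum_multiset_map_count, Finset.sum_subset (subset_univ _)] at hsum
    intro i _ hi
    rw [Multiset.count_eq_zero.2 (by simpa using hi), zero_smul]

end ZeroSum

theorem Matrix.natCard_quotient_range_toLin'_s17 {ι : Type*} [Fintype ι] [DecidableEq ι]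
    (S : Matrix ι ι ℤ) (hS : S.det ≠ 0) :
    Nat.card ((ι → ℤ) ⧸ LinearMap.range (toLin' S)) = S.det.natAbs := by
  rw [← Submodule.natAbs_det_equiv _
    (LinearEquiv.ofInjective _ (mulVec_injective_of_det_ne_zero hS)), ← LinearMap.det_toLin' S]
  rfl

variable {m ι : Type*} [Fintype ι] [DecidableEq ι]

theorem Matrix.exists_le_ne_zero_mulVec_mem (G : Matrix m ι ℤ) (L : Submodule ℤ (m → ℤ))
    [Finite ((m → ℤ) ⧸ L)] (x : ι → ℕ) (hx : Nat.card ((m → ℤ) ⧸ L) ≤ ∑ i, x i) :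
    ∃ d ≤ x, d ≠ 0 ∧ G *ᵥ (fun i => (d i : ℤ)) ∈ L := by
  obtain ⟨d, hdx, hd0, hsum⟩ :=
    exists_le_ne_zero_sum_nsmul_eq_zero (fun i => L.mkQ (G.col i)) x hx
  refine ⟨d, hdx, hd0, ?_⟩
  rw [← Submodule.Quotient.mk_eq_zero, ← hsum]
  simpa [← Pi.single_apply, Pi.single_comm] using
    (L.mkQ ∘ₗ G.mulVecLin).pi_apply_eq_sum_univ fun i => (d i : ℤ)

theorem Matrix.exists_mulVec_sub_mem_sum_mul_le_sum_lt_card (G : Matrix m ι ℤ)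
    (L : Submodule ℤ (m → ℤ)) [Finite ((m → ℤ) ⧸ L)] (g : m → ℤ) (c x : ι → ℕ)
    (hx : G *ᵥ (fun i => (x i : ℤ)) - g ∈ L) :
    ∃ z : ι → ℕ, G *ᵥ (fun i => (z i : ℤ)) - g ∈ L ∧ ∑ i, c i * z i ≤ ∑ i, c i * x i ∧
      ∑ i, z i < Nat.card ((m → ℤ) ⧸ L) := by
  induction hn : ∑ i, x i using Nat.strong_induction_on generalizing x with
  | _ N ih =>
  by_cases hN : N < Nat.card ((m → ℤ) ⧸ L)
  · exact ⟨x, hx, le_rfl, hn ▸ hN⟩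
  obtain ⟨d, hdx, hd0, hd⟩ := G.exists_le_ne_zero_mulVec_mem L x (by omega)
  have hcast : (fun i => ((x - d) i : ℤ)) = (fun i => (x i : ℤ)) - fun i => (d i : ℤ) := by
    ext i; simp [Nat.cast_sub (hdx i)]
  have hlt : ∑ i, (x - d) i < N := by
    obtain ⟨i, hi⟩ := Function.ne_iff.1 hd0
    rw [← hn]
    refine sum_lt_sum (fun i _ => Nat.sub_le _ _) ⟨i, mem_univ i, ?_⟩
    exact Nat.sub_lt (Nat.pos_of_ne_zero hi |>.trans_le (hdx i)) (Nat.pos_of_ne_zero hi)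
  obtain ⟨z, hz, hcz, hzL⟩ := ih _ hlt (x - d) (by
    rw [hcast, mulVec_sub, sub_right_comm]; exact L.sub_mem hx hd) rfl
  exact ⟨z, hz, hcz.trans (sum_le_sum fun i _ => Nat.mul_le_mul_left _ (Nat.sub_le _ _)), hzL⟩

theorem stmt17_general (n : ℕ) (G S : Matrix (Fin n) (Fin n) ℤ)
    (hS : S.det ≠ 0)
    (g : Fin n → ℤ) (c : Fin n → ℕ)
    (hfeas : ∃ x : Fin n → ℕ, ∃ y : Fin n → ℤ,
      G.mulVec (fun i => (x i : ℤ)) - g = S.mulVec y) :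
    ∃ z : Fin n → ℕ,
      (∃ y : Fin n → ℤ, G.mulVec (fun i => (z i : ℤ)) - g = S.mulVec y) ∧
      (∀ x : Fin n → ℕ,
        (∃ y : Fin n → ℤ, G.mulVec (fun i => (x i : ℤ)) - g = S.mulVec y) →
        ∑ i, c i * z i ≤ ∑ i, c i * x i) ∧
      ∑ i, z i ≤ S.det.natAbs - 1 := by
  set L := LinearMap.range (toLin' S)
  have hcard : Nat.card ((Fin n → ℤ) ⧸ L) = S.det.natAbs := S.natCard_quotient_range_toLin'_s17 hS
  have : Finite ((Fin n → ℤ) ⧸ L) :=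
    Nat.finite_of_card_ne_zero (hcard ▸ Int.natAbs_ne_zero.2 hS)
  have hmem (v : Fin n → ℤ) : (∃ y, v = S *ᵥ y) ↔ v ∈ L := by simp [L, eq_comm]
  simp only [hmem] at hfeas ⊢
  obtain ⟨x, hx, hxmin⟩ := exists_minimalFor_of_wellFoundedLT _ (fun x => ∑ i, c i * x i) hfeas
  obtain ⟨z, hz, hzx, hzL⟩ := G.exists_mulVec_sub_mem_sum_mul_le_sum_lt_card L g c x hx
  exact ⟨z, hz, fun y hy => hzx.trans ((le_total _ _).elim id (hxmin hy)), by omega⟩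

/-- unbounded case via Gomory, `m = 0`: for
`min{cᵀx : Gx ≡ g (mod S), x ∈ ℤⁿ_{≥0}}` with `c ≥ 0` and `S` nonsingular
diagonal (Smith Normal Form), if the problem is feasible then there exists an
optimal solution `z*` with `‖z*‖₁ ≤ |det S| − 1`. -/
theorem stmt17 (n : ℕ) (G S : Matrix (Fin n) (Fin n) ℤ)
    (hSdiag : ∀ i j : Fin n, i ≠ j → S i j = 0) (hS : S.det ≠ 0)
    (hSNF : ∀ i j : Fin n, i ≤ j → S i i ∣ S j j)
    (g : Fin n → ℤ) (c : Fin n → ℕ)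
    (hfeas : ∃ x : Fin n → ℕ, ∃ y : Fin n → ℤ,
      G.mulVec (fun i => (x i : ℤ)) - g = S.mulVec y) :
    ∃ z : Fin n → ℕ,
      (∃ y : Fin n → ℤ, G.mulVec (fun i => (z i : ℤ)) - g = S.mulVec y) ∧
      (∀ x : Fin n → ℕ,
        (∃ y : Fin n → ℤ, G.mulVec (fun i => (x i : ℤ)) - g = S.mulVec y) →
        ∑ i, c i * z i ≤ ∑ i, c i * x i) ∧
      ∑ i, z i ≤ S.det.natAbs - 1 :=
  stmt17_general n G S hS g c hfeas
end
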